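/- arXiv:2410.00809 — 7 statements merged into one kernel-verified Lean document; each statement's English description precedes it below -/
import Mathlib

section
/- Let A be a finite abelian group and G a finite group with |G| > 1 and gcd(|A|, |G|) = 1. Then there is no finite group H such that: |H| = |A|·|G|, the abelianization H/[H,H] is isomorphic to A, and the center Z(H) contains a subgroup isomorphic to G. -/
/-!
Let `K ≤ Z(H)` be the given copy of `G`, so `[H : K] = |A|` and `[H : Z(H)]` divides `|A|`.
An element `k ∈ K` has order dividing `|G|`, coprime to `|H/[H,H]| = |A|`, so `k ∈ [H,H]`.
The transfer `H → Z(H)`, `g ↦ g ^ [H : Z(H)]`, is a homomorphism to an abelian group, hence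
kills `[H,H]`; so the order of `k` also divides `[H : Z(H)]`, hence `|A|`, and `k = 1`.
Thus `K` is trivial, contradicting `|G| > 1`.
-/

namespace Subgroup

variable {H : Type*} [Group H]

open scoped IsMulCommutative in
theorem pow_index_center_eq_one_of_mem_commutator [(center H).FiniteIndex] {g : H}
    (hg : g ∈ _root_.commutator H) : g ^ (center H).index = 1 := by
  have hker : MonoidHom.transferCenterPow H g = 1 :=
    Abelianization.commutator_subset_ker (MonoidHom.transferCenterPow H) hg
  simpa only [MonoidHom.transferCenterPow_apply, OneMemClass.coe_one] using
    congrArg Subtype.val hker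

theorem mem_commutator_of_coprime_card_abelianization [Finite (Abelianization H)] {g : H}
    (hg : (orderOf g).Coprime (Nat.card (Abelianization H))) : g ∈ _root_.commutator H := by
  rw [← Abelianization.ker_of, MonoidHom.mem_ker, ← orderOf_eq_one_iff]
  exact Nat.eq_one_of_dvd_coprimes hg (orderOf_map_dvd _ g) (_root_.orderOf_dvd_natCard _)

theorem eq_bot_of_le_center_of_coprime [Finite H] {K : Subgroup H} (hK : K ≤ center H)
    (hindex : (Nat.card K).Coprime K.index)
    (hab : (Nat.card K).Coprime (Nat.card (Abelianization H))) : K = ⊥ := by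
  rw [eq_bot_iff_forall]
  intro k hk
  have hord : orderOf k ∣ Nat.card K := K.orderOf_dvd_natCard hk
  have hpow : k ^ (center H).index = 1 :=
    pow_index_center_eq_one_of_mem_commutator
      (mem_commutator_of_coprime_card_abelianization (hab.coprime_dvd_left hord))
  rw [← orderOf_eq_one_iff]
  exact Nat.eq_one_of_dvd_coprimes hindex hord
    ((orderOf_dvd_of_pow_eq_one hpow).trans (index_dvd_of_le hK))

end Subgroup

theorem stmt2 {A : Type*} [CommGroup A] [Fintype A] {G : Type*} [Group G] [Fintype G]
    (hG : 1 < Fintype.card G)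
    (hcop : Nat.Coprime (Fintype.card A) (Fintype.card G)) :
    ∀ (H : Type*) [Group H] [Fintype H],
      Fintype.card H = Fintype.card A * Fintype.card G →
      Nonempty (Abelianization H ≃* A) →
      (∃ K : Subgroup H, K ≤ Subgroup.center H ∧ Nonempty (K ≃* G)) →
      False := by
  intro H _ _ hcard ⟨e⟩ ⟨K, hKZ, ⟨f⟩⟩
  have hK : Nat.card K = Fintype.card G := by
    rw [Nat.card_congr f.toEquiv, Nat.card_eq_fintype_card]
  have hab : Nat.card (Abelianization H) = Fintype.card A := by
    rw [Nat.card_congr e.toEquiv, Nat.card_eq_fintype_card]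
  have hindex : K.index = Fintype.card A := by
    have := K.index_mul_card
    rw [hK, Nat.card_eq_fintype_card, hcard] at this
    exact Nat.eq_of_mul_eq_mul_right Fintype.card_pos this
  have hbot : K = ⊥ :=
    Subgroup.eq_bot_of_le_center_of_coprime hKZ (by rw [hK, hindex]; exact hcop.symm)
      (by rw [hK, hab]; exact hcop.symm)
  rw [← hK, hbot, Subgroup.card_bot] at hG
  exact lt_irrefl 1 hG
end

section
/- Let N ≥ 1, let G be a finite group, and let ρ : G → GL_N(ℚ) be a homomorphism such that ρ(g) is a signed permutation matrix for every g ∈ G, and such that for every g ∈ G with g ≠ e, the only v ∈ ℚᴺ with ρ(g)(v) = v is v = 0. Then |G| is a power of 2. -/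
theorem stmt9 {N : ℕ} (hN : 1 ≤ N) {G : Type*} [Group G] [Fintype G]
    (ρ : G →* Matrix.GeneralLinearGroup (Fin N) ℚ)
    (hsp : ∀ g : G, ∃ (π : Equiv.Perm (Fin N)) (s : Fin N → ℚ),
      (∀ i, s i = 1 ∨ s i = -1) ∧
      ∀ (v : Fin N → ℚ) (i : Fin N),
        Matrix.mulVec (ρ g : Matrix (Fin N) (Fin N) ℚ) v i = s i * v (π.symm i))
    (hfpf : ∀ g : G, g ≠ 1 → ∀ v : Fin N → ℚ,
      Matrix.mulVec (ρ g : Matrix (Fin N) (Fin N) ℚ) v = v → v = 0) :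
    ∃ m : ℕ, Fintype.card G = 2 ^ m := by
  have key : ∀ p : ℕ, p.Prime → p ∣ Fintype.card G → p = 2 := by
    intro p hp hdvd
    by_contra hp2
    have hodd : Odd p := hp.odd_of_ne_two hp2
    haveI : Fact p.Prime := ⟨hp⟩
    obtain ⟨g, hg⟩ := exists_prime_orderOf_dvd_card p hdvd
    have hgne : g ≠ 1 := by
      intro h
      rw [h, orderOf_one] at hg
      exact hp.ne_one hg.symm
    obtain ⟨π, s, hs, hform⟩ := hsp g
    set M : Matrix (Fin N) (Fin N) ℚ := (ρ g : Matrix (Fin N) (Fin N) ℚ) with hM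
    -- M ^ p = 1
    have hMn : M ^ p = 1 := by
      have h1 : (ρ g) ^ p = 1 := by
        rw [← map_pow, ← hg, pow_orderOf_eq_one, map_one]
      calc M ^ p = (((ρ g) ^ p : Matrix.GeneralLinearGroup (Fin N) ℚ) :
          Matrix (Fin N) (Fin N) ℚ) := by
            rw [hM]; exact (Units.val_pow_eq_pow_val _ _).symm
        _ = 1 := by rw [h1]; rfl
    set i0 : Fin N := ⟨0, hN⟩ with hi0
    set e : Fin N → ℚ := fun i => if i = i0 then 1 else 0 with he
    set c : ℕ → Fin N := fun k => (π ^ k) i0 with hc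
    set σ : ℕ → ℚ := fun k => ∏ j ∈ Finset.range k, s (c (j + 1)) with hσ
    have hc0 : c 0 = i0 := by simp [hc]
    have hcs : ∀ k, c (k + 1) = π (c k) := by
      intro k
      show (π ^ (k + 1)) i0 = π ((π ^ k) i0)
      rw [pow_succ']; rfl
    have hσ0 : σ 0 = 1 := by simp [hσ]
    have hσs : ∀ k, σ (k + 1) = s (π (c k)) * σ k := by
      intro k
      show (∏ j ∈ Finset.range (k + 1), s (c (j + 1)))
        = s (π (c k)) * ∏ j ∈ Finset.range k, s (c (j + 1))
      rw [Finset.prod_range_succ, ← hcs k]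
      ring
    have hσpm : ∀ k, σ k = 1 ∨ σ k = -1 := by
      intro k
      induction k with
      | zero => left; exact hσ0
      | succ k ih =>
        rw [hσs]
        rcases hs (π (c k)) with h1 | h1 <;> rcases ih with h2 | h2 <;>
          simp [h1, h2]
    -- key computation : M^k e = σ k • δ_{c k}
    have hMk : ∀ k, (M ^ k).mulVec e = fun i => if i = c k then σ k else 0 := by
      intro k
      induction k with
      | zero =>
        funext i
        rw [pow_zero, Matrix.one_mulVec]
        simp [he, hc0, hσ0]
      | succ k ih =>
        funext i
        rw [pow_succ', ← Matrix.mulVec_mulVec, ih, hform]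
        by_cases hi : i = c (k + 1)
        · have h2 : π.symm i = c k := by
            rw [hi, hcs k, Equiv.symm_apply_apply]
          rw [if_pos hi, if_pos h2, hσs, hi, hcs k]
        · have h2 : π.symm i ≠ c k := by
            intro h
            apply hi
            rw [hcs k, ← h, Equiv.apply_symm_apply]
          rw [if_neg hi, if_neg h2, mul_zero]
    -- cocycle properties
    have hcadd : ∀ a b, c b = i0 → c (a + b) = c a := by
      intro a b hb
      show (π ^ (a + b)) i0 = (π ^ a) i0
      rw [pow_add, Equiv.Perm.mul_apply]
      exact congrArg _ hb
    have hσadd : ∀ a b, c b = i0 → σ (a + b) = σ a * σ b := by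
      intro a b hb
      induction a with
      | zero => rw [zero_add, hσ0, one_mul]
      | succ a ih =>
        have : a + 1 + b = (a + b) + 1 := by ring
        rw [this, hσs, ih, hσs, hcadd a b hb, mul_assoc]
    -- periodicity facts from M^p = 1
    have hMne : (M ^ p).mulVec e = e := by rw [hMn, Matrix.one_mulVec]
    have hcp : c p = i0 ∧ σ p = 1 := by
      rw [hMk p] at hMne
      have := congrFun hMne i0
      simp only [he, if_pos rfl] at this
      by_cases hcc : i0 = c p
      · rw [if_pos hcc] at this
        exact ⟨hcc.symm, this⟩
      · rw [if_neg hcc] at this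
        exact absurd this.symm one_ne_zero
    set d : ℕ := Function.minimalPeriod π i0 with hd
    have hdp : d ∣ p := by
      apply Function.IsPeriodicPt.minimalPeriod_dvd
      show (⇑π)^[p] i0 = i0
      rw [Equiv.Perm.iterate_eq_pow]
      exact hcp.1
    have hcd : c d = i0 := by
      show (π ^ d) i0 = i0
      rw [← Equiv.Perm.iterate_eq_pow]
      exact Function.isPeriodicPt_minimalPeriod π i0
    -- σ on multiples of d
    have hcmul : ∀ j, c (j * d) = i0 := by
      intro j
      induction j with
      | zero => simpa using hc0
      | succ j ih =>
        have : (j + 1) * d = d + j * d := by ring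
        rw [this, hcadd d (j * d) ih, hcd]
    have hσmul : ∀ j, σ (j * d) = (σ d) ^ j := by
      intro j
      induction j with
      | zero => simpa using hσ0
      | succ j ih =>
        have h1 : (j + 1) * d = d + j * d := by ring
        rw [h1, hσadd d (j * d) (hcmul j), ih, pow_succ']
    -- σ d = 1
    have hεone : σ d = 1 := by
      have hpd : p / d * d = p := Nat.div_mul_cancel hdp
      have h1 : (σ d) ^ (p / d) = 1 := by rw [← hσmul, hpd]; exact hcp.2
      rcases hσpm d with h | h
      · exact h
      · exfalso
        have hoddq : Odd (p / d) := by
          rcases Nat.even_or_odd (p / d) with hev | ho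
          · exfalso
            have h2d : (2:ℕ) ∣ p := dvd_trans hev.two_dvd (Nat.div_dvd_of_dvd hdp)
            rw [Nat.odd_iff] at hodd
            omega
          · exact ho
        rw [h, hoddq.neg_one_pow] at h1
        norm_num at h1
    -- σ k = 1 whenever c k = i0
    have hσone : ∀ k, i0 = c k → σ k = 1 := by
      intro k hk
      have hper : d ∣ k := by
        apply Function.IsPeriodicPt.minimalPeriod_dvd
        show (⇑π)^[k] i0 = i0
        rw [Equiv.Perm.iterate_eq_pow]
        exact hk.symm
      obtain ⟨j, rfl⟩ := hper
      rw [mul_comm, hσmul, hεone, one_pow]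
    -- the fixed vector
    set v : Fin N → ℚ := ∑ k ∈ Finset.range p, (M ^ k).mulVec e with hv
    have hfix : M.mulVec v = v := by
      have h1 : M.mulVec v = ∑ k ∈ Finset.range p, (M ^ (k + 1)).mulVec e := by
        rw [hv]
        rw [show M.mulVec (∑ k ∈ Finset.range p, (M ^ k).mulVec e)
          = M.mulVecLin (∑ k ∈ Finset.range p, (M ^ k).mulVec e) from rfl, map_sum]
        refine Finset.sum_congr rfl fun k _ => ?_
        rw [Matrix.mulVecLin_apply, Matrix.mulVec_mulVec, ← pow_succ']
      rw [h1, hv]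
      have h2 := (Finset.sum_range_succ' (fun k => (M ^ k).mulVec e) p).symm.trans
        (Finset.sum_range_succ (fun k => (M ^ k).mulVec e) p)
      have h3 : (M ^ 0).mulVec e = (M ^ p).mulVec e := by
        rw [pow_zero, hMn]
      rw [h3] at h2
      exact add_right_cancel h2
    have hv0 : v = 0 := hfpf g hgne v hfix
    -- but v i0 > 0
    have hvpos : 0 < v i0 := by
      have hvi : v i0 = ∑ k ∈ Finset.range p, (if i0 = c k then σ k else 0) := by
        rw [hv]
        rw [Finset.sum_apply]
        exact Finset.sum_congr rfl fun k _ => by rw [hMk k]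
      rw [hvi]
      apply Finset.sum_pos'
      · intro k _
        by_cases hk : i0 = c k
        · rw [if_pos hk, hσone k hk]; norm_num
        · rw [if_neg hk]
      · refine ⟨0, Finset.mem_range.mpr hp.pos, ?_⟩
        rw [if_pos hc0.symm, hσ0]
        norm_num
    rw [hv0] at hvpos
    exact lt_irrefl 0 hvpos
  have hpos : Fintype.card G ≠ 0 := Fintype.card_ne_zero
  exact ⟨(Fintype.card G).primeFactorsList.length,
    Nat.eq_prime_pow_of_unique_prime_dvd hpos fun hq hd => key _ hq hd⟩
end

section
/- Let p be an odd prime and k ≥ 1, and set m = p^(k−1). Let Λ = (A_{p−1})^m be the orthogonal direct sum of m copies of A_{p−1}, and define σ_{p^k} : Λ → Λ by σ_{p^k}(v₁, v₂, …, v_m) := (σ(v_m), v₁, …, v_{m−1}), where σ is the cyclic shift on A_{p−1}. Then σ_{p^k} preserves the inner product of Λ, has order exactly p^k, and for every integer ℓ with 0 < ℓ < p^k, the only v ∈ Λ with σ_{p^k}^ℓ(v) = v is v = 0. -/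
/-!
Going once around the `m` blocks, the twist `σ` is picked up exactly once by every block, so
`σ_{p^k}^m` is `σ` applied blockwise and `σ_{p^k}^{pm} = id` with `pm = p^k`. A point fixed by
`σ_{p^k}^ℓ` is then fixed by `σ_{p^k}^{gcd(ℓ, p^k)}`, and for `0 < ℓ < p^k` this gcd divides
`p^{k-1} = m`. So every block is fixed by `σ`, i.e. constant, and a constant vector with
coordinate sum `0` vanishes.
-/

/-- The cyclic shift `σ(u₁,…,u_p) = (u_p, u₁, …, u_{p−1})` on `ℤᵖ`. -/
def cycShift (p : ℕ) (u : Fin p → ℤ) : Fin p → ℤ :=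
  fun i => u ((finRotate p).symm i)

/-- The map `σ_{p^k}(v₁, …, v_m) = (σ(v_m), v₁, …, v_{m−1})` on `(ℤᵖ)ᵐ`. -/
def bigShift (p m : ℕ) (v : Fin m → Fin p → ℤ) : Fin m → Fin p → ℤ :=
  fun i =>
    if (i : ℕ) = 0 then cycShift p (v ((finRotate m).symm i))
    else v ((finRotate m).symm i)

open Function

section CycShift

variable {p : ℕ}

open Fin.NatCast in
lemma cycShift_iterate_apply [NeZero p] (n : ℕ) (u : Fin p → ℤ) (i : Fin p) :
    (cycShift p)^[n] u i = u (i - n) := by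
  induction n generalizing i with
  | zero => simp
  | succ n ih => simp [iterate_succ_apply', cycShift, ih, sub_sub, add_comm]

lemma cycShift_iterate_self : (cycShift p)^[p] = id := by
  funext u i
  have : NeZero p := i.neZero
  simp [cycShift_iterate_apply]

lemma eq_zero_of_cycShift_eq_self {u : Fin p → ℤ} (h : cycShift p u = u)
    (hsum : ∑ j, u j = 0) : u = 0 := by
  funext i
  have : NeZero p := i.neZero
  have hconst (j : Fin p) : u j = u 0 := by
    rw [← congrFun (iterate_fixed h j.val) j, cycShift_iterate_apply, Fin.cast_val_eq_self,
      sub_self]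
  rw [Finset.sum_congr rfl fun j _ => hconst j, Finset.sum_const, Finset.card_univ,
    Fintype.card_fin, nsmul_eq_mul, mul_eq_zero] at hsum
  rw [hconst, Pi.zero_apply]
  exact hsum.resolve_left (Nat.cast_ne_zero.mpr (NeZero.ne p))

end CycShift

section BigShift

variable {p m : ℕ}

lemma sum_bigShift_apply (v : Fin m → Fin p → ℤ) (i : Fin m) :
    ∑ j, bigShift p m v i j = ∑ j, v ((finRotate m).symm i) j := by
  unfold bigShift
  split_ifs
  · exact Equiv.sum_comp _ _
  · rfl

lemma sum_bigShift_mul_bigShift (v w : Fin m → Fin p → ℤ) :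
    ∑ i, ∑ j, bigShift p m v i j * bigShift p m w i j = ∑ i, ∑ j, v i j * w i j := by
  rw [← Equiv.sum_comp (finRotate m).symm fun i => ∑ j, v i j * w i j]
  refine Finset.sum_congr rfl fun i _ => ?_
  unfold bigShift
  split_ifs
  · exact Equiv.sum_comp _ fun j => v _ j * w _ j
  · rfl

lemma bigShift_iterate_apply {r : ℕ} (hr : r ≤ m) (v : Fin m → Fin p → ℤ) (i : Fin m) :
    (bigShift p m)^[r] v i =
      if h : r ≤ i then v ⟨i - r, by omega⟩ else cycShift p (v ⟨i + m - r, by omega⟩) := by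
  induction r generalizing i with
  | zero => simp
  | succ r ih =>
    have : NeZero m := ⟨by omega⟩
    rw [iterate_succ_apply', bigShift, ih (by omega)]
    by_cases hi : (i : ℕ) = 0
    · have hrot : ((finRotate m).symm i : ℕ) = m - 1 := by
        obtain ⟨n, rfl⟩ := Nat.exists_eq_succ_of_ne_zero (NeZero.ne m)
        rw [show i = 0 from Fin.ext hi, finRotate_symm_apply, zero_sub, Fin.coe_neg_one]
        rfl
      simp only [if_pos hi, hrot]
      rw [dif_pos (by omega), dif_neg (by omega)]
      congr 3
      omega
    · have hrot := coe_finRotate_symm_of_ne_zero (Fin.val_ne_zero_iff.mp hi)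
      simp only [if_neg hi, hrot]
      split_ifs <;> first | omega | (congr 2; omega) | (congr 3; omega)

lemma bigShift_iterate_self : (bigShift p m)^[m] = Pi.map fun _ => cycShift p := by
  funext v i
  rw [bigShift_iterate_apply le_rfl, dif_neg (by omega)]
  simp

lemma isPeriodicPt_bigShift (v : Fin m → Fin p → ℤ) : IsPeriodicPt (bigShift p m) (m * p) v := by
  rw [IsPeriodicPt, IsFixedPt, iterate_mul, bigShift_iterate_self, Pi.map_iterate,
    cycShift_iterate_self]
  rfl

lemma eq_zero_of_isPeriodicPt_bigShift {v : Fin m → Fin p → ℤ}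
    (hv : IsPeriodicPt (bigShift p m) m v) (hsum : ∀ i, ∑ j, v i j = 0) : v = 0 := by
  funext i
  refine eq_zero_of_cycShift_eq_self ?_ (hsum i)
  simpa [bigShift_iterate_self] using congrFun hv.eq i

end BigShift

lemma Nat.gcd_dvd_prime_pow_pred {p k ℓ : ℕ} (hp : p.Prime) (h0 : 0 < ℓ) (hℓ : ℓ < p ^ k) :
    ℓ.gcd (p ^ k) ∣ p ^ (k - 1) := by
  obtain ⟨i, hik, hi⟩ := (Nat.dvd_prime_pow hp).mp (Nat.gcd_dvd_right ℓ (p ^ k))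
  have hik' : i ≠ k := by
    rintro rfl
    exact absurd (Nat.le_of_dvd h0 (hi ▸ Nat.gcd_dvd_left ℓ (p ^ i))) (by omega)
  rw [hi]
  exact Nat.pow_dvd_pow p (by omega)

lemma exists_ne_zero_sum_eq_zero (ι : Type*) [Fintype ι] [DecidableEq ι] [Nontrivial ι] :
    ∃ u : ι → ℤ, u ≠ 0 ∧ ∑ j, u j = 0 := by
  obtain ⟨a, b, hab⟩ := exists_pair_ne ι
  refine ⟨Pi.single a 1 - Pi.single b 1, fun h => ?_, by simp [Finset.sum_sub_distrib]⟩
  simpa [hab] using congrFun h a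

theorem stmt12_general (p k : ℕ) (hp : p.Prime) (hk : 1 ≤ k) :
    -- σ_{p^k} maps Λ = (A_{p-1})^{p^{k-1}} to itself
    (∀ v : Fin (p ^ (k - 1)) → Fin p → ℤ, (∀ i, ∑ j, v i j = 0) →
      ∀ i, ∑ j, bigShift p (p ^ (k - 1)) v i j = 0) ∧
    -- σ_{p^k} preserves the inner product of Λ
    (∀ v w : Fin (p ^ (k - 1)) → Fin p → ℤ,
      (∀ i, ∑ j, v i j = 0) → (∀ i, ∑ j, w i j = 0) →
      ∑ i, ∑ j, bigShift p (p ^ (k - 1)) v i j * bigShift p (p ^ (k - 1)) w i j =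
        ∑ i, ∑ j, v i j * w i j) ∧
    -- σ_{p^k}^{p^k} = id on Λ
    (∀ v : Fin (p ^ (k - 1)) → Fin p → ℤ, (∀ i, ∑ j, v i j = 0) →
      (bigShift p (p ^ (k - 1)))^[p ^ k] v = v) ∧
    -- σ_{p^k} has order exactly p^k on Λ
    (∀ ℓ : ℕ, 0 < ℓ → ℓ < p ^ k →
      ∃ v : Fin (p ^ (k - 1)) → Fin p → ℤ, (∀ i, ∑ j, v i j = 0) ∧
        (bigShift p (p ^ (k - 1)))^[ℓ] v ≠ v) ∧
    -- every nontrivial power of σ_{p^k} is fixed-point free on Λ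
    (∀ ℓ : ℕ, 0 < ℓ → ℓ < p ^ k →
      ∀ v : Fin (p ^ (k - 1)) → Fin p → ℤ, (∀ i, ∑ j, v i j = 0) →
        (bigShift p (p ^ (k - 1)))^[ℓ] v = v → v = 0) := by
  have hper (v : Fin (p ^ (k - 1)) → Fin p → ℤ) : IsPeriodicPt (bigShift p _) (p ^ k) v := by
    rw [← pow_sub_one_mul (by omega : k ≠ 0)]
    exact isPeriodicPt_bigShift v
  have hfree : ∀ ℓ : ℕ, 0 < ℓ → ℓ < p ^ k → ∀ v : Fin (p ^ (k - 1)) → Fin p → ℤ,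
      (∀ i, ∑ j, v i j = 0) → (bigShift p (p ^ (k - 1)))^[ℓ] v = v → v = 0 :=
    fun ℓ h0 hℓ v hsum hv => eq_zero_of_isPeriodicPt_bigShift
      ((IsPeriodicPt.gcd hv (hper v)).trans_dvd (Nat.gcd_dvd_prime_pow_pred hp h0 hℓ)) hsum
  refine ⟨fun v hv i => (sum_bigShift_apply v i).trans (hv _),
    fun v w _ _ => sum_bigShift_mul_bigShift v w, fun v _ => (hper v).eq,
    fun ℓ h0 hℓ => ?_, hfree⟩
  have : Nontrivial (Fin p) := Fin.nontrivial_iff_two_le.mpr hp.two_le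
  obtain ⟨u, hu, husum⟩ := exists_ne_zero_sum_eq_zero (Fin p)
  refine ⟨fun _ => u, fun _ => husum, fun hv => hu ?_⟩
  exact congrFun (hfree ℓ h0 hℓ _ (fun _ => husum) hv) ⟨0, pow_pos hp.pos _⟩

theorem stmt12 (p k : ℕ) (hp : p.Prime) (hodd : Odd p) (hk : 1 ≤ k) :
    -- σ_{p^k} maps Λ = (A_{p-1})^{p^{k-1}} to itself
    (∀ v : Fin (p ^ (k - 1)) → Fin p → ℤ, (∀ i, ∑ j, v i j = 0) →
      ∀ i, ∑ j, bigShift p (p ^ (k - 1)) v i j = 0) ∧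
    -- σ_{p^k} preserves the inner product of Λ
    (∀ v w : Fin (p ^ (k - 1)) → Fin p → ℤ,
      (∀ i, ∑ j, v i j = 0) → (∀ i, ∑ j, w i j = 0) →
      ∑ i, ∑ j, bigShift p (p ^ (k - 1)) v i j * bigShift p (p ^ (k - 1)) w i j =
        ∑ i, ∑ j, v i j * w i j) ∧
    -- σ_{p^k}^{p^k} = id on Λ
    (∀ v : Fin (p ^ (k - 1)) → Fin p → ℤ, (∀ i, ∑ j, v i j = 0) →
      (bigShift p (p ^ (k - 1)))^[p ^ k] v = v) ∧
    -- σ_{p^k} has order exactly p^k on Λ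
    (∀ ℓ : ℕ, 0 < ℓ → ℓ < p ^ k →
      ∃ v : Fin (p ^ (k - 1)) → Fin p → ℤ, (∀ i, ∑ j, v i j = 0) ∧
        (bigShift p (p ^ (k - 1)))^[ℓ] v ≠ v) ∧
    -- every nontrivial power of σ_{p^k} is fixed-point free on Λ
    (∀ ℓ : ℕ, 0 < ℓ → ℓ < p ^ k →
      ∀ v : Fin (p ^ (k - 1)) → Fin p → ℤ, (∀ i, ∑ j, v i j = 0) →
        (bigShift p (p ^ (k - 1)))^[ℓ] v = v → v = 0) :=
  stmt12_general p k hp hk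
end

section
/- Let p and p' be distinct odd primes and let n be an integer not divisible by p. Suppose p' ≡ −p (mod 4), the Legendre symbol (p'/p) equals (2n/p), and the Legendre symbol (2/p') equals (2n/p). Then there exist integers a and b such that n ≡ 2p'a² (mod p) and 1 ≡ 2pb² (mod p'). -/
theorem stmt13 (p p' : ℕ) [Fact p.Prime] [Fact p'.Prime]
    (hp2 : p ≠ 2) (hp'2 : p' ≠ 2) (hne : p ≠ p')
    (n : ℤ) (hpn : ¬ (p : ℤ) ∣ n)
    (h4 : (p' : ℤ) ≡ -(p : ℤ) [ZMOD 4])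
    (hleg1 : legendreSym p (p' : ℤ) = legendreSym p (2 * n))
    (hleg2 : legendreSym p' 2 = legendreSym p (2 * n)) :
    ∃ a b : ℤ, n ≡ 2 * (p' : ℤ) * a ^ 2 [ZMOD p] ∧ 1 ≡ 2 * (p : ℤ) * b ^ 2 [ZMOD p'] := by
  have hpp : p.Prime := Fact.out
  have hpp' : p'.Prime := Fact.out
  -- basic nonvanishing facts mod p
  have h2p : ((2 : ℤ) : ZMod p) ≠ 0 := by
    intro h
    rw [ZMod.intCast_zmod_eq_zero_iff_dvd] at h
    have : p ∣ 2 := by exact_mod_cast h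
    exact hp2 ((Nat.prime_dvd_prime_iff_eq hpp Nat.prime_two).mp this)
  have h2pz : (2 : ZMod p) ≠ 0 := by exact_mod_cast h2p
  have hnp : ((n : ℤ) : ZMod p) ≠ 0 := by
    intro h
    rw [ZMod.intCast_zmod_eq_zero_iff_dvd] at h
    exact hpn h
  have hp'p : (((p' : ℤ)) : ZMod p) ≠ 0 := by
    intro h
    rw [ZMod.intCast_zmod_eq_zero_iff_dvd, Int.natCast_dvd_natCast] at h
    exact hne ((Nat.prime_dvd_prime_iff_eq hpp hpp').mp h)
  have hp'pz : ((p' : ℕ) : ZMod p) ≠ 0 := by exact_mod_cast hp'p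
  have h2np : (((2 * n : ℤ)) : ZMod p) ≠ 0 := by
    push_cast; exact mul_ne_zero h2pz hnp
  have h2p' : ((2 : ℤ) : ZMod p') ≠ 0 := by
    intro h
    rw [ZMod.intCast_zmod_eq_zero_iff_dvd] at h
    have : p' ∣ 2 := by exact_mod_cast h
    exact hp'2 ((Nat.prime_dvd_prime_iff_eq hpp' Nat.prime_two).mp this)
  have h2p'z : (2 : ZMod p') ≠ 0 := by exact_mod_cast h2p'
  have hpp'0 : (((p : ℤ)) : ZMod p') ≠ 0 := by
    intro h
    rw [ZMod.intCast_zmod_eq_zero_iff_dvd, Int.natCast_dvd_natCast] at h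
    exact hne ((Nat.prime_dvd_prime_iff_eq hpp' hpp).mp h).symm
  have hpp'0z : ((p : ℕ) : ZMod p') ≠ 0 := by exact_mod_cast hpp'0
  -- legendre of 2*p'*n mod p is 1
  have key1 : legendreSym p (2 * (p' : ℤ) * n) = 1 := by
    rw [legendreSym.mul, legendreSym.mul, hleg1, legendreSym.mul]
    have hs2 : legendreSym p 2 ^ 2 = 1 := legendreSym.sq_one p h2p
    have hsn : legendreSym p n ^ 2 = 1 := legendreSym.sq_one p hnp
    nlinarith [hs2, hsn]
  -- quadratic reciprocity: one of p, p' is 1 mod 4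
  have hrec : legendreSym p' (p : ℤ) = legendreSym p (p' : ℤ) := by
    have hdvd : (4 : ℤ) ∣ (p' : ℤ) + (p : ℤ) := by
      have := h4.dvd
      omega
    have hdvdN : (4 : ℤ) ∣ ((p' + p : ℕ) : ℤ) := by push_cast; exact hdvd
    have hdvdN' : 4 ∣ p' + p := by exact_mod_cast hdvdN
    have hpo : p % 2 = 1 := Nat.odd_iff.mp (hpp.odd_of_ne_two hp2)
    have hp'o : p' % 2 = 1 := Nat.odd_iff.mp (hpp'.odd_of_ne_two hp'2)
    have : p % 4 = 1 ∨ p' % 4 = 1 := by omega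
    rcases this with h1 | h1
    · exact legendreSym.quadratic_reciprocity_one_mod_four h1 hp'2
    · exact (legendreSym.quadratic_reciprocity_one_mod_four h1 hp2).symm
  -- legendre of 2*p mod p' is 1
  have key2 : legendreSym p' (2 * (p : ℤ)) = 1 := by
    rw [legendreSym.mul, hleg2, hrec, hleg1]
    have hs : legendreSym p (2 * n) ^ 2 = 1 := legendreSym.sq_one p h2np
    nlinarith [hs]
  -- extract square roots
  have h2p'n : (((2 * (p' : ℤ) * n : ℤ)) : ZMod p) ≠ 0 := by
    push_cast
    exact mul_ne_zero (mul_ne_zero h2pz hp'pz) hnp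
  have h2pp' : (((2 * (p : ℤ) : ℤ)) : ZMod p') ≠ 0 := by
    push_cast
    exact mul_ne_zero h2p'z hpp'0z
  obtain ⟨c, hc⟩ := (legendreSym.eq_one_iff p h2p'n).mp key1
  obtain ⟨d, hd⟩ := (legendreSym.eq_one_iff p' h2pp').mp key2
  have hc0 : c ≠ 0 := by
    intro h; rw [h, mul_zero] at hc; exact h2p'n hc
  have hd0 : d ≠ 0 := by
    intro h; rw [h, mul_zero] at hd; exact h2pp' hd
  push_cast at hc hd
  -- construct a and b
  set w : ZMod p := (2 : ZMod p) * ((p' : ℕ) : ZMod p) with hw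
  have hw0 : w ≠ 0 := mul_ne_zero h2pz hp'pz
  refine ⟨(ZMod.cast (w⁻¹ * c) : ℤ), (ZMod.cast (d⁻¹ : ZMod p') : ℤ), ?_, ?_⟩
  · rw [← ZMod.intCast_eq_intCast_iff]
    push_cast
    have : (2 : ZMod p) * ((p' : ℕ) : ZMod p) * (w⁻¹ * c) ^ 2 = (n : ZMod p) := by
      calc (2 : ZMod p) * ((p' : ℕ) : ZMod p) * (w⁻¹ * c) ^ 2
          = (c * c) * (w * w⁻¹) * w⁻¹ := by rw [hw]; ring
        _ = (w * (n : ZMod p)) * (w * w⁻¹) * w⁻¹ := by rw [hc]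
        _ = (n : ZMod p) * (w * w⁻¹) * (w * w⁻¹) := by ring
        _ = (n : ZMod p) := by rw [mul_inv_cancel₀ hw0]; ring
    exact this.symm
  · rw [← ZMod.intCast_eq_intCast_iff]
    push_cast
    have hdd : (2 : ZMod p') * ((p : ℕ) : ZMod p') = d * d := hd
    calc (1 : ZMod p')
        = (d * d⁻¹) * (d * d⁻¹) := by rw [mul_inv_cancel₀ hd0]; ring
      _ = (d * d) * (d⁻¹)^2 := by ring
      _ = 2 * ((p : ℕ) : ZMod p') * (d⁻¹)^2 := by rw [← hdd]
end

section
/- Let p be an odd prime and let n be an integer not divisible by p. Then there are infinitely many primes p' such that p' ≡ −p (mod 4), the Legendre symbol (p'/p) equals (2n/p), and the Legendre symbol (2/p') equals (2n/p). -/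
open ZMod

private lemma legSym_congr {p : ℕ} [Fact p.Prime] {a b : ℤ}
    (h : ((a : ℤ) : ZMod p) = ((b : ℤ) : ZMod p)) :
    legendreSym p a = legendreSym p b := by
  unfold legendreSym
  rw [h]

private lemma aux14 (p : ℕ) [Fact p.Prime] (hp2 : p ≠ 2)
    (n : ℤ) (hpn : ¬ (p : ℤ) ∣ n) (r : ZMod 8) (hru : IsUnit r)
    (hr4 : ZMod.castHom (by norm_num : (4:ℕ) ∣ 8) (ZMod 4) r = -(p : ZMod 4))
    (hrχ : ZMod.χ₈ r = legendreSym p (2 * n)) (N : ℕ) :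
    ∃ p' : ℕ, N < p' ∧ ∃ hp' : p'.Prime, p' ≠ 2 ∧
      (p' : ℤ) ≡ -(p : ℤ) [ZMOD 4] ∧
      legendreSym p (p' : ℤ) = legendreSym p (2 * n) ∧
      @legendreSym p' ⟨hp'⟩ (2 : ℤ) = legendreSym p (2 * n) := by
  have hp : p.Prime := Fact.out
  have hn0 : ((2 * n : ℤ) : ZMod p) ≠ 0 := by
    rw [Ne, ZMod.intCast_zmod_eq_zero_iff_dvd]
    intro h
    rcases (Int.Prime.dvd_mul' (by exact_mod_cast hp) h) with h2 | hn
    · have : p ∣ 2 := by exact_mod_cast h2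
      exact hp2 ((Nat.prime_dvd_prime_iff_eq hp Nat.prime_two).mp this)
    · exact hpn hn
  have hcop : Nat.Coprime 8 p := by
    refine Nat.Coprime.symm (hp.coprime_iff_not_dvd.mpr fun h => hp2 ?_)
    have : p ∣ 2 ^ 3 := by norm_num at h ⊢; exact h
    exact (Nat.prime_dvd_prime_iff_eq hp Nat.prime_two).mp (hp.dvd_of_dvd_pow this)
  set u : ℕ := ((2 * n : ℤ) : ZMod p).val with hu_def
  have hu : ((u : ℕ) : ZMod p) = ((2 * n : ℤ) : ZMod p) := by
    simp [hu_def, ZMod.natCast_val, ZMod.cast_id]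
  obtain ⟨k, hk8', hkp'⟩ := Nat.chineseRemainder hcop r.val u
  have hk8 : ((k : ℕ) : ZMod 8) = r := by
    rw [(ZMod.natCast_eq_natCast_iff _ _ _).mpr hk8', ZMod.natCast_val, ZMod.cast_id]
  have hkp : ((k : ℕ) : ZMod p) = ((2 * n : ℤ) : ZMod p) := by
    rw [(ZMod.natCast_eq_natCast_iff _ _ _).mpr hkp', hu]
  haveI : NeZero (8 * p) := ⟨Nat.mul_ne_zero (by norm_num) hp.pos.ne'⟩
  have hunit : IsUnit ((k : ZMod (8 * p))) := by
    rw [ZMod.isUnit_iff_coprime]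
    exact Nat.Coprime.mul_right
      ((ZMod.isUnit_iff_coprime k 8).mp (hk8 ▸ hru))
      ((ZMod.isUnit_iff_coprime k p).mp (hkp ▸ isUnit_iff_ne_zero.mpr hn0))
  obtain ⟨p', hgt, hp', hmod⟩ := Nat.forall_exists_prime_gt_and_eq_mod hunit N
  have h8 : ((p' : ℕ) : ZMod 8) = r := by
    have := congrArg (ZMod.castHom (⟨p, rfl⟩ : (8:ℕ) ∣ 8 * p) (ZMod 8)) hmod
    rwa [map_natCast, map_natCast, hk8] at this
  have hpp : ((p' : ℕ) : ZMod p) = ((2 * n : ℤ) : ZMod p) := by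
    have := congrArg (ZMod.castHom (⟨8, mul_comm 8 p⟩ : p ∣ 8 * p) (ZMod p)) hmod
    rwa [map_natCast, map_natCast, hkp] at this
  have hne2 : p' ≠ 2 := by
    rintro rfl
    rw [show (((2:ℕ)) : ZMod 8) = 2 by norm_num] at h8
    rw [← h8] at hru
    exact absurd hru (by decide)
  refine ⟨p', hgt, hp', hne2, ?_, ?_, ?_⟩
  · apply (ZMod.intCast_eq_intCast_iff (p' : ℤ) (-(p : ℤ)) 4).mp
    push_cast
    have := congrArg (ZMod.castHom (by norm_num : (4:ℕ) ∣ 8) (ZMod 4)) h8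
    rw [map_natCast] at this
    rw [this, hr4]
  · exact legSym_congr (by rw [Int.cast_natCast]; exact hpp)
  · haveI : Fact p'.Prime := ⟨hp'⟩
    rw [legendreSym.at_two hne2, h8, hrχ]

theorem stmt14 (p : ℕ) [Fact p.Prime] (hp2 : p ≠ 2)
    (n : ℤ) (hpn : ¬ (p : ℤ) ∣ n) :
    ∀ N : ℕ, ∃ p' : ℕ, N < p' ∧ ∃ hp' : p'.Prime, p' ≠ 2 ∧
      (p' : ℤ) ≡ -(p : ℤ) [ZMOD 4] ∧
      legendreSym p (p' : ℤ) = legendreSym p (2 * n) ∧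
      @legendreSym p' ⟨hp'⟩ (2 : ℤ) = legendreSym p (2 * n) := by
  intro N
  have hp : p.Prime := Fact.out
  have hn0 : ((2 * n : ℤ) : ZMod p) ≠ 0 := by
    rw [Ne, ZMod.intCast_zmod_eq_zero_iff_dvd]
    intro h
    rcases (Int.Prime.dvd_mul' (by exact_mod_cast hp) h) with h2 | hn
    · have : p ∣ 2 := by exact_mod_cast h2
      exact hp2 ((Nat.prime_dvd_prime_iff_eq hp Nat.prime_two).mp this)
    · exact hpn hn
  have hε := legendreSym.eq_one_or_neg_one p hn0
  have hodd : p % 2 = 1 := hp.eq_two_or_odd.resolve_left hp2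
  have hmm : p % 4 % 2 = p % 2 := Nat.mod_mod_of_dvd p (by norm_num)
  have h4 : p % 4 = 1 ∨ p % 4 = 3 := by omega
  rcases h4 with h4 | h4 <;> rcases hε with he | he
  · exact aux14 p hp2 n hpn 7 (by decide)
      (by rw [← ZMod.natCast_mod p 4, h4]; decide) (by rw [he]; decide) N
  · exact aux14 p hp2 n hpn 3 (by decide)
      (by rw [← ZMod.natCast_mod p 4, h4]; decide) (by rw [he]; decide) N
  · exact aux14 p hp2 n hpn 1 (by decide)
      (by rw [← ZMod.natCast_mod p 4, h4]; decide) (by rw [he]; decide) N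
  · exact aux14 p hp2 n hpn 5 (by decide)
      (by rw [← ZMod.natCast_mod p 4, h4]; decide) (by rw [he]; decide) N
end

section
/- Let K be a group and ω : K × K × K → ℂˣ a normalized 3-cocycle. For x, g, h, y ∈ K define θ_x(g,h) := ω(x,g,h)·ω(g,h,(gh)⁻¹x(gh)) / ω(g, g⁻¹xg, h) and σ_g(x,y) := ω(x,y,g)·ω(g, g⁻¹xg, g⁻¹yg) / ω(x, g, g⁻¹yg), and write x ◁ g := g⁻¹xg for the right conjugation action. Then for all x, y, g, h, k ∈ K: (1) θ_{x◁g}(h,k)·θ_x(g,hk) = θ_x(gh,k)·θ_x(g,h); (2) σ_x(h,k)·σ_x(g,hk) / (σ_x(gh,k)·σ_x(g,h)) = ω(g◁x, h◁x, k◁x) / ω(g,h,k); and (3) σ_{xy}(g,h) / (σ_x(g,h)·σ_y(g◁x, h◁x)) = θ_g(x,y)·θ_h(x,y) / θ_{gh}(x,y). -/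
/-- `θ_x(g,h) := ω(x,g,h)·ω(g,h,(gh)⁻¹x(gh)) / ω(g, g⁻¹xg, h)`. -/
def dblTheta {K : Type*} [Group K] (ω : K → K → K → ℂˣ) (x g h : K) : ℂˣ :=
  ω x g h * ω g h ((g * h)⁻¹ * x * (g * h)) * (ω g (g⁻¹ * x * g) h)⁻¹

/-- `σ_g(x,y) := ω(x,y,g)·ω(g, g⁻¹xg, g⁻¹yg) / ω(x, g, g⁻¹yg)`. -/
def dblSigma {K : Type*} [Group K] (ω : K → K → K → ℂˣ) (g x y : K) : ℂˣ :=
  ω x y g * ω g (g⁻¹ * x * g) (g⁻¹ * y * g) * (ω x g (g⁻¹ * y * g))⁻¹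

set_option maxHeartbeats 4000000 in
theorem stmt17 {K : Type*} [Group K] (ω : K → K → K → ℂˣ)
    (hc : ∀ x y z w : K,
      ω y z w * ω x (y * z) w * ω x y z = ω (x * y) z w * ω x y (z * w))
    (hnorm : ∀ x y z : K, (x = 1 ∨ y = 1 ∨ z = 1) → ω x y z = 1) :
    -- (1) θ_{x◁g}(h,k)·θ_x(g,hk) = θ_x(gh,k)·θ_x(g,h)
    (∀ x g h k : K,
      dblTheta ω (g⁻¹ * x * g) h k * dblTheta ω x g (h * k) =
        dblTheta ω x (g * h) k * dblTheta ω x g h) ∧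
    -- (2) σ_x(h,k)·σ_x(g,hk) / (σ_x(gh,k)·σ_x(g,h)) = ω(g◁x,h◁x,k◁x) / ω(g,h,k)
    (∀ x g h k : K,
      dblSigma ω x h k * dblSigma ω x g (h * k) *
          (dblSigma ω x (g * h) k * dblSigma ω x g h)⁻¹ =
        ω (x⁻¹ * g * x) (x⁻¹ * h * x) (x⁻¹ * k * x) * (ω g h k)⁻¹) ∧
    -- (3) σ_{xy}(g,h) / (σ_x(g,h)·σ_y(g◁x,h◁x)) = θ_g(x,y)·θ_h(x,y) / θ_{gh}(x,y)
    (∀ x y g h : K,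
      dblSigma ω (x * y) g h *
          (dblSigma ω x g h * dblSigma ω y (x⁻¹ * g * x) (x⁻¹ * h * x))⁻¹ =
        dblTheta ω g x y * dblTheta ω h x y * (dblTheta ω (g * h) x y)⁻¹) := by
  refine ⟨?_, ?_, ?_⟩
  · intro x g h k
    have h1 := hc x g h k
    have h2 := hc g (g⁻¹ * x * g) h k
    have h3 := hc g h ((g * h)⁻¹ * x * (g * h)) k
    have h4 := hc g h k ((g * h * k)⁻¹ * x * (g * h * k))
    have u1 : ω (x * g) h k * ω x g (h * k) * (ω g h k * ω x (g * h) k * ω x g h)⁻¹ = 1 := mul_inv_eq_one.mpr h1.symm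
    have u2 : ω (g⁻¹ * x * g) h k * ω g ((g⁻¹ * x * g) * h) k * ω g (g⁻¹ * x * g) h * (ω (g * (g⁻¹ * x * g)) h k * ω g (g⁻¹ * x * g) (h * k))⁻¹ = 1 := mul_inv_eq_one.mpr h2
    have u3 : ω (g * h) ((g * h)⁻¹ * x * (g * h)) k * ω g h (((g * h)⁻¹ * x * (g * h)) * k) * (ω h ((g * h)⁻¹ * x * (g * h)) k * ω g (h * ((g * h)⁻¹ * x * (g * h))) k * ω g h ((g * h)⁻¹ * x * (g * h)))⁻¹ = 1 := mul_inv_eq_one.mpr h3.symm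
    have u4 : ω h k ((g * h * k)⁻¹ * x * (g * h * k)) * ω g (h * k) ((g * h * k)⁻¹ * x * (g * h * k)) * ω g h k * (ω (g * h) k ((g * h * k)⁻¹ * x * (g * h * k)) * ω g h (k * ((g * h * k)⁻¹ * x * (g * h * k))))⁻¹ = 1 := mul_inv_eq_one.mpr h4
    have key : dblTheta ω (g⁻¹ * x * g) h k * dblTheta ω x g (h * k) = dblTheta ω x (g * h) k * dblTheta ω x g h * (ω (x * g) h k * ω x g (h * k) * (ω g h k * ω x (g * h) k * ω x g h)⁻¹) * (ω (g⁻¹ * x * g) h k * ω g ((g⁻¹ * x * g) * h) k * ω g (g⁻¹ * x * g) h * (ω (g * (g⁻¹ * x * g)) h k * ω g (g⁻¹ * x * g) (h * k))⁻¹) * (ω (g * h) ((g * h)⁻¹ * x * (g * h)) k * ω g h (((g * h)⁻¹ * x * (g * h)) * k) * (ω h ((g * h)⁻¹ * x * (g * h)) k * ω g (h * ((g * h)⁻¹ * x * (g * h))) k * ω g h ((g * h)⁻¹ * x * (g * h)))⁻¹) * (ω h k ((g * h * k)⁻¹ * x * (g * h * k)) * ω g (h * k) ((g * h * k)⁻¹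 * x * (g * h * k)) * ω g h k * (ω (g * h) k ((g * h * k)⁻¹ * x * (g * h * k)) * ω g h (k * ((g * h * k)⁻¹ * x * (g * h * k))))⁻¹) := by
      simp only [dblTheta, dblSigma, mul_assoc, mul_inv_rev, inv_inv, one_mul, mul_one, inv_one, mul_inv_cancel_left, inv_mul_cancel_left, mul_inv_cancel, inv_mul_cancel]
      rw [Units.ext_iff]
      push_cast [Units.val_inv_eq_inv_val]
      field_simp
    rw [u1, u2, u3, u4] at key
    simpa using key
  · intro x g h k
    have h1 := hc g h k x
    have h2 := hc g h x (x⁻¹ * k * x)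
    have h3 := hc g x (x⁻¹ * h * x) (x⁻¹ * k * x)
    have h4 := hc x (x⁻¹ * g * x) (x⁻¹ * h * x) (x⁻¹ * k * x)
    have u1 : ω h k x * ω g (h * k) x * ω g h k * (ω (g * h) k x * ω g h (k * x))⁻¹ = 1 := mul_inv_eq_one.mpr h1
    have u2 : ω (g * h) x (x⁻¹ * k * x) * ω g h (x * (x⁻¹ * k * x)) * (ω h x (x⁻¹ * k * x) * ω g (h * x) (x⁻¹ * k * x) * ω g h x)⁻¹ = 1 := mul_inv_eq_one.mpr h2.symm
    have u3 : ω x (x⁻¹ * h * x) (x⁻¹ * k * x) * ω g (x * (x⁻¹ * h * x)) (x⁻¹ * k * x) * ω g x (x⁻¹ * h * x) * (ω (g * x) (x⁻¹ * h * x) (x⁻¹ * k * x) * ω g x ((x⁻¹ * h * x) * (x⁻¹ * k * x)))⁻¹ = 1 := mul_inv_eq_one.mpr h3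
    have u4 : ω (x * (x⁻¹ * g * x)) (x⁻¹ * h * x) (x⁻¹ * k * x) * ω x (x⁻¹ * g * x) ((x⁻¹ * h * x) * (x⁻¹ * k * x)) * (ω (x⁻¹ * g * x) (x⁻¹ * h * x) (x⁻¹ * k * x) * ω x ((x⁻¹ * g * x) * (x⁻¹ * h * x)) (x⁻¹ * k * x) * ω x (x⁻¹ * g * x) (x⁻¹ * h * x))⁻¹ = 1 := mul_inv_eq_one.mpr h4.symm
    have key : dblSigma ω x h k * dblSigma ω x g (h * k) * (dblSigma ω x (g * h) k * dblSigma ω x g h)⁻¹ = ω (x⁻¹ * g * x) (x⁻¹ * h * x) (x⁻¹ * k * x) * (ω g h k)⁻¹ * (ω h k x * ω g (h * k) x * ω g h k * (ω (g * h) k x * ω g h (k * x))⁻¹) * (ω (g * h) x (x⁻¹ * k * x) * ω g h (x * (x⁻¹ * k * x)) * (ω h x (x⁻¹ * k * x) * ω g (h * x) (x⁻¹ * k * x) * ω g h x)⁻¹) * (ω x (x⁻¹ * h * x) (x⁻¹ * k * x) * ω g (x * (x⁻¹ * h * x)) (x⁻¹ * k * x) * ω g x (x⁻¹ * h * x) *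 (ω (g * x) (x⁻¹ * h * x) (x⁻¹ * k * x) * ω g x ((x⁻¹ * h * x) * (x⁻¹ * k * x)))⁻¹) * (ω (x * (x⁻¹ * g * x)) (x⁻¹ * h * x) (x⁻¹ * k * x) * ω x (x⁻¹ * g * x) ((x⁻¹ * h * x) * (x⁻¹ * k * x)) * (ω (x⁻¹ * g * x) (x⁻¹ * h * x) (x⁻¹ * k * x) * ω x ((x⁻¹ * g * x) * (x⁻¹ * h * x)) (x⁻¹ * k * x) * ω x (x⁻¹ * g * x) (x⁻¹ * h * x))⁻¹) := by
      simp only [dblTheta, dblSigma, mul_assoc, mul_inv_rev, inv_inv, one_mul, mul_one, inv_one, mul_inv_cancel_left, inv_mul_cancel_left, mul_inv_cancel, inv_mul_cancel]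
      rw [Units.ext_iff]
      push_cast [Units.val_inv_eq_inv_val]
      field_simp
    rw [u1, u2, u3, u4] at key
    simpa using key
  · intro x y g h
    have h1 := hc g h x y
    have h2 := hc g x (x⁻¹ * h * x) y
    have h3 := hc x (x⁻¹ * g * x) (x⁻¹ * h * x) y
    have h4 := hc g x y ((x * y)⁻¹ * h * (x * y))
    have h5 := hc x (x⁻¹ * g * x) y ((x * y)⁻¹ * h * (x * y))
    have h6 := hc x y ((x * y)⁻¹ * g * (x * y)) ((x * y)⁻¹ * h * (x * y))
    have u1 : ω (g * h) x y * ω g h (x * y) * (ω h x y * ω g (h * x) y * ω g h x)⁻¹ = 1 := mul_inv_eq_one.mpr h1.symm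
    have u2 : ω x (x⁻¹ * h * x) y * ω g (x * (x⁻¹ * h * x)) y * ω g x (x⁻¹ * h * x) * (ω (g * x) (x⁻¹ * h * x) y * ω g x ((x⁻¹ * h * x) * y))⁻¹ = 1 := mul_inv_eq_one.mpr h2
    have u3 : ω (x * (x⁻¹ * g * x)) (x⁻¹ * h * x) y * ω x (x⁻¹ * g * x) ((x⁻¹ * h * x) * y) * (ω (x⁻¹ * g * x) (x⁻¹ * h * x) y * ω x ((x⁻¹ * g * x) * (x⁻¹ * h * x)) y * ω x (x⁻¹ * g * x) (x⁻¹ * h * x))⁻¹ = 1 := mul_inv_eq_one.mpr h3.symm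
    have u4 : ω (g * x) y ((x * y)⁻¹ * h * (x * y)) * ω g x (y * ((x * y)⁻¹ * h * (x * y))) * (ω x y ((x * y)⁻¹ * h * (x * y)) * ω g (x * y) ((x * y)⁻¹ * h * (x * y)) * ω g x y)⁻¹ = 1 := mul_inv_eq_one.mpr h4.symm
    have u5 : ω (x⁻¹ * g * x) y ((x * y)⁻¹ * h * (x * y)) * ω x ((x⁻¹ * g * x) * y) ((x * y)⁻¹ * h * (x * y)) * ω x (x⁻¹ * g * x) y * (ω (x * (x⁻¹ * g * x)) y ((x * y)⁻¹ * h * (x * y)) * ω x (x⁻¹ * g * x) (y * ((x * y)⁻¹ * h * (x * y))))⁻¹ = 1 := mul_inv_eq_one.mpr h5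
    have u6 : ω (x * y) ((x * y)⁻¹ * g * (x * y)) ((x * y)⁻¹ * h * (x * y)) * ω x y (((x * y)⁻¹ * g * (x * y)) * ((x * y)⁻¹ * h * (x * y))) * (ω y ((x * y)⁻¹ * g * (x * y)) ((x * y)⁻¹ * h * (x * y)) * ω x (y * ((x * y)⁻¹ * g * (x * y))) ((x * y)⁻¹ * h * (x * y)) * ω x y ((x * y)⁻¹ * g * (x * y)))⁻¹ = 1 := mul_inv_eq_one.mpr h6.symm
    have key : dblSigma ω (x * y) g h * (dblSigma ω x g h * dblSigma ω y (x⁻¹ * g * x) (x⁻¹ * h * x))⁻¹ = dblTheta ω g x y * dblTheta ω h x y * (dblTheta ω (g * h) x y)⁻¹ * (ω (g * h) x y * ω g h (x * y) * (ω h x y * ω g (h * x) y * ω g h x)⁻¹) * (ω x (x⁻¹ * h * x) y * ω g (x * (x⁻¹ * h * x)) y * ω g x (x⁻¹ * h * x) * (ω (g * x) (x⁻¹ * h * x) y * ω g x ((x⁻¹ * h * x) * y))⁻¹) * (ω (x * (x⁻¹ * g * x)) (x⁻¹ * h * x) y * ω x (x⁻¹ * g * x) ((x⁻¹ * h * x)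 * y) * (ω (x⁻¹ * g * x) (x⁻¹ * h * x) y * ω x ((x⁻¹ * g * x) * (x⁻¹ * h * x)) y * ω x (x⁻¹ * g * x) (x⁻¹ * h * x))⁻¹) * (ω (g * x) y ((x * y)⁻¹ * h * (x * y)) * ω g x (y * ((x * y)⁻¹ * h * (x * y))) * (ω x y ((x * y)⁻¹ * h * (x * y)) * ω g (x * y) ((x * y)⁻¹ * h * (x * y)) * ω g x y)⁻¹) * (ω (x⁻¹ * g * x) y ((x * y)⁻¹ * h * (x * y)) * ω x ((x⁻¹ * g * x) * y) ((x * y)⁻¹ * h * (x * y)) * ω x (x⁻¹ * g * x) y * (ω (x * (x⁻¹ * g * x)) y ((x * y)⁻¹ * h * (x * y)) * ω x (x⁻¹ * g * x) (y * ((x * y)⁻¹ * h * (x * y))))⁻¹) * (ω (x * y) ((x * y)⁻¹ * g * (x * y)) ((x * y)⁻¹ * h * (x * y)) * ω x y (((x * y)⁻¹ * g * (x * y)) * ((x * y)⁻¹ * h * (x * y))) * (ω y ((x * y)⁻¹ * g * (x * y)) ((x * y)⁻¹ * h * (x * y)) * ω x (y * ((x * y)⁻¹ * g * (x * y))) ((x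 * y)⁻¹ * h * (x * y)) * ω x y ((x * y)⁻¹ * g * (x * y)))⁻¹) := by
      simp only [dblTheta, dblSigma, mul_assoc, mul_inv_rev, inv_inv, one_mul, mul_one, inv_one, mul_inv_cancel_left, inv_mul_cancel_left, mul_inv_cancel, inv_mul_cancel]
      rw [Units.ext_iff]
      push_cast [Units.val_inv_eq_inv_val]
      field_simp
    rw [u1, u2, u3, u4, u5, u6] at key
    simpa using key
end

section
/- Let G be a group and ω : G × G × G → ℂˣ a normalized 3-cocycle. Fix g ∈ G and define θ_g(h,k) := ω(g,h,k)·ω(h,k,g) / ω(h,g,k) for h, k in the centralizer C_G(g). Then θ_g is a 2-cocycle on C_G(g): θ_g(h,k)·θ_g(hk,l) = θ_g(k,l)·θ_g(h,kl) for all h, k, l ∈ C_G(g). -/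
/-- `θ_g(h,k) := ω(g,h,k)·ω(h,k,g) / ω(h,g,k)`. -/
def centTheta {G : Type*} [Group G] (ω : G → G → G → ℂˣ) (g h k : G) : ℂˣ :=
  ω g h k * ω h k g * (ω h g k)⁻¹

theorem stmt19 {G : Type*} [Group G] (ω : G → G → G → ℂˣ)
    (hc : ∀ x y z w : G,
      ω y z w * ω x (y * z) w * ω x y z = ω (x * y) z w * ω x y (z * w))
    (hnorm : ∀ x y z : G, (x = 1 ∨ y = 1 ∨ z = 1) → ω x y z = 1)
    (g : G) :
    ∀ h k l : G, h * g = g * h → k * g = g * k → l * g = g * l →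
      centTheta ω g h k * centTheta ω g (h * k) l =
        centTheta ω g k l * centTheta ω g h (k * l) := by
  intro h k l hg hk hl
  have E1 := congrArg Units.val (hc g h k l)
  have E2 := congrArg Units.val (hc h g k l)
  have E3 := congrArg Units.val (hc h k g l)
  have E4 := congrArg Units.val (hc h k l g)
  rw [hg] at E2
  rw [hk] at E3
  rw [hl] at E4
  push_cast at E1 E2 E3 E4
  apply Units.ext
  simp only [centTheta]
  push_cast
  field_simp
  apply mul_right_cancel₀ (b := (ω h k l : ℂ) * (ω h k (g * l) : ℂ))
    (mul_ne_zero (ω h k l).ne_zero (ω h k (g * l)).ne_zero)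
  linear_combination
    ((ω h k g : ℂ) * (ω (h * k) l g : ℂ) * (ω k g l : ℂ) * (ω h g (k * l) : ℂ) *
        (ω h k (g * l) : ℂ)) * E1
    - ((ω (g * h) k l : ℂ) * (ω g h (k * l) : ℂ) * (ω h k g : ℂ) * (ω k g l : ℂ) *
        (ω h g (k * l) : ℂ)) * E4
    + ((ω g k l : ℂ) * (ω k l g : ℂ) * (ω g h (k * l) : ℂ) * (ω h (k * l) g : ℂ) *
        (ω h g k : ℂ) * (ω h k l : ℂ)) * E3
    - ((ω h k g : ℂ) * (ω k g l : ℂ) * (ω k l g : ℂ) * (ω g h (k * l) : ℂ) *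
        (ω h (k * l) g : ℂ) * (ω h k l : ℂ)) * E2
end
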